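/- Let τ ∈ (0, 1/2] and v ∈ S² with |v·e₁| ≤ √(1-τ²). Then there exists w ∈ S² such that |v+w| = 2τ and (v+w)·e₁ = 0. Conversely, if such w exists then |v·e₁| ≤ √(1-τ²). -/

import Mathlib

open scoped RealInnerProductSpace

noncomputable def e1 : EuclideanSpace ℝ (Fin 3) := EuclideanSpace.single 0 1

/-!
Put `u = v + w`. Since `‖v‖ = 1`, the condition `‖w‖ = ‖u - v‖ = 1` reads `‖u‖² = 2⟪u, v⟫`, and
for `u ⊥ e₁` only the component `x = v - ⟪v, e₁⟫ e₁` of `v` enters `⟪u, v⟫`; note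
`‖x‖² = 1 - ⟪v, e₁⟫²`. So we need `u ⊥ e₁` with `‖u‖ = 2τ` and `⟪u, x⟫ = 2τ²`. By Cauchy–Schwarz
this forces `2τ² ≤ 2τ‖x‖`, i.e. `τ ≤ ‖x‖`; conversely, if `τ ≤ ‖x‖`, such a `u` is found in the
plane spanned by `x` and a unit vector orthogonal to both `e₁` and `x`, which exists in dimension 3.
-/

open Module

section

variable {𝕜 E : Type*} [RCLike 𝕜] [NormedAddCommGroup E] [InnerProductSpace 𝕜 E]

theorem exists_norm_eq_one_inner_eq_zero_of_three_le_finrank [FiniteDimensional 𝕜 E]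
    (hE : 3 ≤ finrank 𝕜 E) (x y : E) :
    ∃ n : E, ‖n‖ = 1 ∧ inner 𝕜 x n = 0 ∧ inner 𝕜 y n = 0 := by
  classical
  set K := Submodule.span 𝕜 ({x, y} : Set E)
  have hK : finrank 𝕜 K ≤ 2 := by
    have h := (finrank_span_finset_le_card (R := 𝕜) {x, y}).trans Finset.card_le_two
    rwa [Finset.coe_insert, Finset.coe_singleton] at h
  have hKperp : Kᗮ ≠ ⊥ := by
    rw [Ne, ← Submodule.finrank_eq_zero]
    have := K.finrank_add_finrank_orthogonal
    omega
  obtain ⟨m, hm, hm0⟩ := Submodule.exists_mem_ne_zero_of_ne_bot hKperp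
  refine ⟨(‖m‖⁻¹ : 𝕜) • m, norm_smul_inv_norm hm0, ?_, ?_⟩ <;>
    refine Submodule.inner_right_of_mem_orthogonal (Submodule.subset_span ?_) (Kᗮ.smul_mem _ hm) <;>
    simp

end

section

variable {E : Type*} [NormedAddCommGroup E] [InnerProductSpace ℝ E]

theorem norm_sub_eq_one_iff_of_norm_eq_one {u v : E} (hv : ‖v‖ = 1) :
    ‖u - v‖ = 1 ↔ ‖u‖ ^ 2 = 2 * ⟪u, v⟫ := by
  rw [← sq_eq_sq₀ (norm_nonneg _) zero_le_one, norm_sub_sq_real, hv]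
  constructor <;> intro h <;> linarith

theorem norm_sub_inner_smul_sq_of_norm_eq_one {e : E} (he : ‖e‖ = 1) (v : E) :
    ‖v - ⟪v, e⟫ • e‖ ^ 2 = ‖v‖ ^ 2 - ⟪v, e⟫ ^ 2 := by
  rw [norm_sub_sq_real, inner_smul_right, norm_smul, real_inner_comm, he, Real.norm_eq_abs]
  ring_nf
  rw [sq_abs]
  ring

theorem exists_inner_eq_norm_eq_of_abs_le {x n : E} (hn : ‖n‖ = 1) (hxn : ⟪x, n⟫ = 0) {c r : ℝ}
    (hr : 0 ≤ r) (hc : |c| ≤ r * ‖x‖) :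
    ∃ α β : ℝ, ⟪α • x + β • n, x⟫ = c ∧ ‖α • x + β • n‖ = r := by
  set α := c / ‖x‖ ^ 2
  have hαc : α * ‖x‖ ^ 2 = c := by
    rcases (norm_nonneg x).eq_or_lt with hx | hx
    · -- here `α = c / 0 = 0`, and `c = 0` by `hc`
      rw [← hx] at hc ⊢
      simpa [eq_comm] using hc
    · exact div_mul_cancel₀ c (by positivity)
  have hαr : (α * ‖x‖) ^ 2 ≤ r ^ 2 := by
    rcases (norm_nonneg x).eq_or_lt with hx | hx
    · simpa [← hx] using sq_nonneg r
    have hc2 : c ^ 2 ≤ (r * ‖x‖) ^ 2 := sq_le_sq.mpr (hc.trans (le_abs_self _))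
    refine le_of_mul_le_mul_right ?_ (by positivity : 0 < ‖x‖ ^ 2)
    rw [← hαc] at hc2
    linarith
  refine ⟨α, √(r ^ 2 - (α * ‖x‖) ^ 2), ?_, ?_⟩
  · rw [inner_add_left, inner_smul_left, inner_smul_left, real_inner_self_eq_norm_sq,
      real_inner_comm, hxn]
    simpa using hαc
  · rw [← sq_eq_sq₀ (norm_nonneg _) hr, sq, norm_add_sq_eq_norm_sq_add_norm_sq_real]
    · rw [norm_smul, norm_smul, hn, Real.norm_eq_abs, Real.norm_eq_abs,
        abs_of_nonneg (Real.sqrt_nonneg _)]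
      linear_combination ‖x‖ ^ 2 * sq_abs α + Real.sq_sqrt (sub_nonneg.mpr hαr)
    · rw [inner_smul_left, inner_smul_right, hxn]
      simp

theorem exists_norm_eq_one_norm_add_eq_inner_eq_zero_iff [FiniteDimensional ℝ E]
    (hE : 3 ≤ finrank ℝ E) {e v : E} (he : ‖e‖ = 1) (hv : ‖v‖ = 1) {τ : ℝ} (hτ : 0 ≤ τ) :
    (∃ w : E, ‖w‖ = 1 ∧ ‖v + w‖ = 2 * τ ∧ ⟪v + w, e⟫ = 0) ↔ ⟪v, e⟫ ^ 2 ≤ 1 - τ ^ 2 := by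
  set x := v - ⟪v, e⟫ • e
  have hx : ‖x‖ ^ 2 = 1 - ⟪v, e⟫ ^ 2 := by
    rw [norm_sub_inner_smul_sq_of_norm_eq_one he, hv]
    ring
  have hxe : ⟪x, e⟫ = 0 := by simp [x, inner_sub_left, inner_smul_left, he]
  have hinner : ∀ u, ⟪u, e⟫ = 0 → ⟪u, v⟫ = ⟪u, x⟫ := by
    intro u hu
    simp [x, inner_sub_right, inner_smul_right, hu]
  rw [le_sub_comm, ← hx, pow_le_pow_iff_left₀ hτ (norm_nonneg x) two_ne_zero]
  constructor
  · rintro ⟨w, hw, hvw, hvwe⟩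
    have h : ‖v + w‖ ^ 2 = 2 * ⟪v + w, x⟫ := by
      rw [← hinner _ hvwe, ← norm_sub_eq_one_iff_of_norm_eq_one hv]
      simpa using hw
    have hcs := real_inner_le_norm (v + w) x
    rw [hvw] at h hcs
    nlinarith [norm_nonneg x]
  · intro hτx
    obtain ⟨n, hn, hen, hxn⟩ := exists_norm_eq_one_inner_eq_zero_of_three_le_finrank hE e x
    obtain ⟨α, β, hux, hu⟩ := exists_inner_eq_norm_eq_of_abs_le (c := 2 * τ ^ 2) (r := 2 * τ)
      hn hxn (by positivity) (by rw [abs_of_nonneg (by positivity)]; nlinarith)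
    set u := α • x + β • n
    have hue : ⟪u, e⟫ = 0 := by
      simp [u, inner_add_left, inner_smul_left, hxe, real_inner_comm e n, hen]
    refine ⟨u - v, ?_, by simpa using hu, by simpa using hue⟩
    rw [norm_sub_eq_one_iff_of_norm_eq_one hv, hinner u hue, hux, hu]
    ring

end

theorem fooTorus_fiber_exists (τ : ℝ) (hτ0 : 0 < τ) (hτ : τ ≤ 1 / 2)
    (v : EuclideanSpace ℝ (Fin 3)) (hv : ‖v‖ = 1) :
    (∃ w : EuclideanSpace ℝ (Fin 3), ‖w‖ = 1 ∧ ‖v + w‖ = 2 * τ ∧ ⟪v + w, e1⟫ = 0) ↔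
      |⟪v, e1⟫| ≤ Real.sqrt (1 - τ ^ 2) := by
  have he1 : ‖e1‖ = 1 := by simp [e1]
  rw [Real.le_sqrt (abs_nonneg _) (by nlinarith), sq_abs]
  exact exists_norm_eq_one_norm_add_eq_inner_eq_zero_iff (by simp) he1 hv hτ0.le
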